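/- In the overalgebra 𝐀 of the first type, for every β ∈ Con 𝐁 the interval [β⋆, β̃] in Con 𝐀 contains every equivalence relation on A lying between β⋆ and β̃, i.e. [β⋆,β̃] = {θ ∈ Eq(A) : β⋆ ⊆ θ ⊆ β̃}, and this interval is isomorphic as a lattice to ∏_{r=1}^{m} ∏_{n=1}^{N} (Eq(𝒯_n ∩ ℐ_r))^{m−1}, where Eq(X) denotes the lattice of equivalence relations on the set X. -/
import Mathlib


namespace Overalg

variable {A : Type*}

/-- `θ` is an equivalence relation on the whole type `A`, viewed as a set of pairs. -/
def IsEquivRel (θ : Set (A × A)) : Prop :=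
  (∀ x : A, (x, x) ∈ θ) ∧ (∀ x y : A, (x, y) ∈ θ → (y, x) ∈ θ) ∧
    (∀ x y z : A, (x, y) ∈ θ → (y, z) ∈ θ → (x, z) ∈ θ)

/-- `θ` is an equivalence relation on the subset `B` of `A`, viewed as a set of pairs. -/
def IsEquivOn (B : Set A) (θ : Set (A × A)) : Prop :=
  θ ⊆ B ×ˢ B ∧ (∀ x ∈ B, (x, x) ∈ θ) ∧ (∀ x y : A, (x, y) ∈ θ → (y, x) ∈ θ) ∧
    (∀ x y z : A, (x, y) ∈ θ → (y, z) ∈ θ → (x, z) ∈ θ)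

/-- The clone of unary polynomials of the unary algebra `⟨A, F⟩`: the smallest set of
maps `A → A` containing `F`, the identity and all constants, closed under composition. -/
inductive Pol1 (F : Set (A → A)) : (A → A) → Prop
  | base : ∀ f ∈ F, Pol1 F f
  | id : Pol1 F _root_.id
  | const : ∀ a : A, Pol1 F (fun _ => a)
  | comp : ∀ f g : A → A, Pol1 F f → Pol1 F g → Pol1 F (f ∘ g)

/-- A congruence of the unary algebra `⟨A, F⟩`. -/
def IsCon (F : Set (A → A)) (θ : Set (A × A)) : Prop :=
  IsEquivRel θ ∧ ∀ f ∈ F, ∀ p ∈ θ, (f p.1, f p.2) ∈ θ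

end Overalg

namespace Overalg

/-- The data of an *overalgebra of the first type* built over a finite base algebra
`𝐁 = ⟨B 0, F⟩` from a tie-point sequence `t 1, …, t K` and a partition
`T 1 | ⋯ | T N` of the index set `{1, …, K}`.  The universe is `A = B 0 ∪ ⋯ ∪ B K`,
where `B i ∩ B 0 = {t i}`, `π i : B 0 → B i` is a bijection fixing `t i`,
`e0` maps each `π i b` back to `b`, and `s n` collapses each `B i` with `i ∈ T n`
to its tie-point `t i` and is the identity elsewhere. -/
structure OvI (A : Type*) where
  K : ℕ
  N : ℕ
  B : ℕ → Set A
  F : Set (A → A)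
  t : ℕ → A
  π : ℕ → A → A
  T : ℕ → Set ℕ
  e0 : A → A
  s : ℕ → A → A
  hfin : Finite A
  /-- `A = B 0 ∪ B 1 ∪ ⋯ ∪ B K` -/
  hA : ∀ x : A, ∃ i ≤ K, x ∈ B i
  /-- the base operations map `B 0` into itself -/
  hF : ∀ f ∈ F, Set.MapsTo f (B 0) (B 0)
  /-- each tie-point `t i` lies in `B 0`, and `B i ∩ B 0 = {t i}` -/
  ht : ∀ i, 1 ≤ i → i ≤ K → t i ∈ B 0 ∧ B i ∩ B 0 = {t i}
  /-- for `i ≠ j`: `B i ∩ B j = {t i}` if `t i = t j`, and `B i ∩ B j = ∅` otherwise -/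
  hdisj : ∀ i j, 1 ≤ i → i ≤ K → 1 ≤ j → j ≤ K → i ≠ j →
    (t i = t j → B i ∩ B j = {t i}) ∧ (t i ≠ t j → B i ∩ B j = ∅)
  /-- `π 0` is the identity -/
  hπ0 : ∀ x : A, π 0 x = x
  /-- `π i` is a bijection of `B 0` onto `B i` -/
  hπbij : ∀ i, 1 ≤ i → i ≤ K → Set.BijOn (π i) (B 0) (B i)
  /-- `π i` fixes the tie-point `t i` -/
  hπt : ∀ i, 1 ≤ i → i ≤ K → π i (t i) = t i
  /-- each block `T n` consists of indices in `{1, …, K}` -/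
  hT1 : ∀ n, 1 ≤ n → n ≤ N → T n ⊆ Set.Icc 1 K
  /-- the blocks `T 1, …, T N` partition `{1, …, K}` -/
  hT2 : ∀ i, 1 ≤ i → i ≤ K → ∃! n, 1 ≤ n ∧ n ≤ N ∧ i ∈ T n
  /-- `e0 (π i b) = b` for `b ∈ B 0`; this says `e0 x = π_{ιx}⁻¹ x` -/
  he0 : ∀ i ≤ K, ∀ b ∈ B 0, e0 (π i b) = b
  /-- `s n` collapses `B i` to `t i` for `i ∈ T n` … -/
  hs1 : ∀ n, 1 ≤ n → n ≤ N → ∀ i ∈ T n, ∀ x ∈ B i, s n x = t i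
  /-- … and is the identity elsewhere -/
  hs2 : ∀ n, 1 ≤ n → n ≤ N → ∀ x : A, (∀ i ∈ T n, x ∉ B i) → s n x = x

namespace OvI

variable {A : Type*} (O : OvI A)

/-- `e k = π k ∘ e0`: the idempotent map of `A` onto `B k`. -/
def e (k : ℕ) : A → A := fun x => O.π k (O.e0 x)

/-- The operations of the overalgebra:
`F_A = {f ∘ e0 : f ∈ F} ∪ {e k : 0 ≤ k ≤ K} ∪ {s n : 1 ≤ n ≤ N}`. -/
def FA : Set (A → A) :=
  {g | ∃ f ∈ O.F, g = f ∘ O.e0} ∪ {g | ∃ k ≤ O.K, g = O.e k} ∪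
    {g | ∃ n, 1 ≤ n ∧ n ≤ O.N ∧ g = O.s n}

/-- A congruence of the base algebra `𝐁 = ⟨B 0, F⟩`. -/
def ConB (β : Set (A × A)) : Prop :=
  IsEquivOn (O.B 0) β ∧ ∀ f ∈ O.F, ∀ p ∈ β, (f p.1, f p.2) ∈ β

/-- The `β`-class of `c`. -/
def cls (_O : OvI A) (β : Set (A × A)) (c : A) : Set A := {x | (c, x) ∈ β}

/-- `β^k = {(π k x, π k y) : (x, y) ∈ β}`, the copy of `β` on `B k`. -/
def bk (β : Set (A × A)) (k : ℕ) : Set (A × A) :=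
  {p | ∃ q ∈ β, p = (O.π k q.1, O.π k q.2)}

/-- For `c ∈ B 0` with class `C = c/β`, this is `C ∪ ⋃_{i ∈ ℐ} π i '' C`, where
`ℐ = {i : t i ∈ C}` — a block of `β⋆` meeting `B 0`. -/
def blk (β : Set (A × A)) (c : A) : Set A :=
  O.cls β c ∪ ⋃ i ∈ {i | 1 ≤ i ∧ i ≤ O.K ∧ (c, O.t i) ∈ β}, O.π i '' O.cls β c

/-- `β⋆ = ⋃_{k=0}^{K} β^k ∪ ⋃_{r=1}^{m} (C_r ∪ ⋃_{i∈ℐ_r} C_r^i)²`. -/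
def bstar (β : Set (A × A)) : Set (A × A) :=
  {p | ∃ k ≤ O.K, p ∈ O.bk β k} ∪
    {p | ∃ c ∈ O.B 0, p.1 ∈ O.blk β c ∧ p.2 ∈ O.blk β c}

/-- For `c, d ∈ B 0` in distinct `β`-classes `C_r = c/β`, `C_ℓ = d/β`, this is
`⋃_{i ∈ T n ∩ ℐ_r} C_ℓ^i`. -/
def wing (β : Set (A × A)) (n : ℕ) (c d : A) : Set A :=
  ⋃ i ∈ {i | i ∈ O.T n ∧ (c, O.t i) ∈ β}, O.π i '' O.cls β d

/-- `β̃ = β⋆ ∪ ⋃_{n=1}^{N} ⋃_{r=1}^m ⋃_{ℓ≠r} (⋃_{i ∈ 𝒯_n ∩ ℐ_r} C_ℓ^i)²`. -/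
def btilde (β : Set (A × A)) : Set (A × A) :=
  O.bstar β ∪
    {p | ∃ n, 1 ≤ n ∧ n ≤ O.N ∧ ∃ c ∈ O.B 0, ∃ d ∈ O.B 0, (c, d) ∉ β ∧
      p.1 ∈ O.wing β n c d ∧ p.2 ∈ O.wing β n c d}

end OvI

end Overalg

namespace Overalg
namespace OvI

variable {A : Type*} {O : OvI A} {β : Set (A × A)}

section Basic
variable (hβ : O.ConB β)
include hβ

lemma bmem_left {x y : A} (h : (x, y) ∈ β) : x ∈ O.B 0 := (hβ.1.1 h).1
lemma bmem_right {x y : A} (h : (x, y) ∈ β) : y ∈ O.B 0 := (hβ.1.1 h).2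
lemma brefl {x : A} (hx : x ∈ O.B 0) : (x, x) ∈ β := hβ.1.2.1 x hx
lemma bsymm {x y : A} (h : (x, y) ∈ β) : (y, x) ∈ β := hβ.1.2.2.1 x y h
lemma btrans {x y z : A} (h : (x, y) ∈ β) (h' : (y, z) ∈ β) : (x, z) ∈ β :=
  hβ.1.2.2.2 x y z h h'

end Basic

lemma pi_mem {k : ℕ} (hk : k ≤ O.K) {b : A} (hb : b ∈ O.B 0) : O.π k b ∈ O.B k := by
  rcases Nat.eq_zero_or_pos k with h | h
  · subst h; rw [O.hπ0]; exact hb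
  · exact (O.hπbij k h hk).mapsTo hb

lemma pi_inj {k : ℕ} (hk : k ≤ O.K) {a b : A} (ha : a ∈ O.B 0) (hb : b ∈ O.B 0)
    (h : O.π k a = O.π k b) : a = b := by
  have h1 := O.he0 k hk a ha
  have h2 := O.he0 k hk b hb
  rw [← h1, h, h2]

lemma rep_exists (x : A) : ∃ k ≤ O.K, ∃ b ∈ O.B 0, x = O.π k b := by
  obtain ⟨i, hi, hx⟩ := O.hA x
  rcases Nat.eq_zero_or_pos i with h | h
  · exact ⟨0, Nat.zero_le _, x, by rwa [h] at hx, (O.hπ0 x).symm⟩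
  · obtain ⟨b, hb, hbx⟩ := (O.hπbij i h hi).surjOn hx
    exact ⟨i, hi, b, hb, hbx.symm⟩

lemma eq_tie {i j : ℕ} (hi1 : 1 ≤ i) (hiK : i ≤ O.K) (hj : j ≤ O.K) (hne : j ≠ i)
    {x : A} (hxi : x ∈ O.B i) (hxj : x ∈ O.B j) : x = O.t i := by
  rcases Nat.eq_zero_or_pos j with h | h
  · subst h
    have h2 := (O.ht i hi1 hiK).2
    have : x ∈ ({O.t i} : Set A) := h2 ▸ (⟨hxi, hxj⟩ : x ∈ O.B i ∩ O.B 0)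
    exact this
  · by_cases hts : O.t i = O.t j
    · have h2 := (O.hdisj i j hi1 hiK h hj (Ne.symm hne)).1 hts
      have : x ∈ ({O.t i} : Set A) := h2 ▸ (⟨hxi, hxj⟩ : x ∈ O.B i ∩ O.B j)
      exact this
    · have h2 := (O.hdisj i j hi1 hiK h hj (Ne.symm hne)).2 hts
      exact absurd (h2 ▸ (⟨hxi, hxj⟩ : x ∈ O.B i ∩ O.B j)) (Set.notMem_empty x)

lemma cross {i j : ℕ} (hi1 : 1 ≤ i) (hiK : i ≤ O.K) (hj : j ≤ O.K) (hne : j ≠ i)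
    {a b : A} (ha : a ∈ O.B 0) (hb : b ∈ O.B 0) (h : O.π i a = O.π j b) : a = O.t i := by
  have hxi : O.π i a ∈ O.B i := pi_mem hiK ha
  have hxj : O.π i a ∈ O.B j := h ▸ pi_mem hj hb
  have hx : O.π i a = O.t i := eq_tie hi1 hiK hj hne hxi hxj
  have hti : O.t i ∈ O.B 0 := (O.ht i hi1 hiK).1
  exact pi_inj hiK ha hti (by rw [hx, O.hπt i hi1 hiK])

variable (hβ : O.ConB β)
include hβ

lemma wingrep {i j : ℕ} (hi1 : 1 ≤ i) (hiK : i ≤ O.K) {a b : A} (ha : a ∈ O.B 0)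
    (hnt : (a, O.t i) ∉ β) (hj : j ≤ O.K) (hb : b ∈ O.B 0)
    (h : O.π i a = O.π j b) : j = i ∧ b = a := by
  by_cases hji : j = i
  · subst hji; exact ⟨rfl, pi_inj hj hb ha h.symm⟩
  · have hat : a = O.t i := cross hi1 hiK hj hji ha hb h
    exact absurd (hat ▸ brefl hβ ha) hnt

lemma blk_elim {c y : A} (hy : y ∈ O.blk β c) :
    ∃ k ≤ O.K, ∃ a ∈ O.B 0, y = O.π k a ∧ (c, a) ∈ β ∧
      (k = 0 ∨ (1 ≤ k ∧ (c, O.t k) ∈ β)) := by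
  rcases hy with hy | hy
  · exact ⟨0, Nat.zero_le _, y, bmem_right hβ hy, (O.hπ0 y).symm, hy, Or.inl rfl⟩
  · simp only [Set.mem_iUnion, Set.mem_image, Set.mem_setOf_eq] at hy
    obtain ⟨i, ⟨hi1, hiK, hti⟩, a, hac, hay⟩ := hy
    exact ⟨i, hiK, a, bmem_right hβ hac, hay.symm, hac, Or.inr ⟨hi1, hti⟩⟩

omit hβ in
lemma mem_blk_base {c y : A} (h : (c, y) ∈ β) : y ∈ O.blk β c := Or.inl h

omit hβ in
lemma mem_blk_pi {c a : A} {i : ℕ} (hi1 : 1 ≤ i) (hiK : i ≤ O.K)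
    (hti : (c, O.t i) ∈ β) (ha : (c, a) ∈ β) : O.π i a ∈ O.blk β c := by
  right
  simp only [Set.mem_iUnion, Set.mem_image, Set.mem_setOf_eq]
  exact ⟨i, ⟨hi1, hiK, hti⟩, a, ha, rfl⟩

lemma wingfree {i : ℕ} (hi1 : 1 ≤ i) (hiK : i ≤ O.K) {a : A} (ha : a ∈ O.B 0)
    (hnt : (a, O.t i) ∉ β) (c : A) : O.π i a ∉ O.blk β c := by
  intro h
  obtain ⟨k, hk, a', ha', heq, hca', hdisj⟩ := blk_elim hβ h
  obtain ⟨hki, ha'a⟩ := wingrep hβ hi1 hiK ha hnt hk ha' heq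
  rcases hdisj with h0 | ⟨hk1, htk⟩
  · omega
  · subst hki
    exact hnt (btrans hβ (bsymm hβ (ha'a ▸ hca')) htk)

lemma blk_sub {c c' : A} (h : (c, c') ∈ β) : O.blk β c' ⊆ O.blk β c := by
  intro y hy
  rcases hy with hy | hy
  · exact mem_blk_base (btrans hβ h hy)
  · simp only [Set.mem_iUnion, Set.mem_image, Set.mem_setOf_eq] at hy
    obtain ⟨i, ⟨hi1, hiK, hti⟩, a, hac, hay⟩ := hy
    exact hay ▸ mem_blk_pi hi1 hiK (btrans hβ h hti) (btrans hβ h hac)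

lemma blk_overlap {c c' y : A} (hy : y ∈ O.blk β c) (hy' : y ∈ O.blk β c') :
    (c, c') ∈ β := by
  obtain ⟨k, hk, a, ha, hya, hca, hd⟩ := blk_elim hβ hy
  obtain ⟨k', hk', a', ha', hya', hca', hd'⟩ := blk_elim hβ hy'
  by_cases hkk : k = k'
  · subst hkk
    have : a = a' := pi_inj hk ha ha' (hya ▸ hya')
    exact btrans hβ hca (bsymm hβ (this ▸ hca'))
  · -- k ≠ k' : y is a tie point
    -- show (c, y) ∈ β and (c', y) ∈ β
    have key : ∀ (cc : A) (k k' : ℕ), k ≤ O.K → k' ≤ O.K → k ≠ k' →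
        ∀ a a' : A, a ∈ O.B 0 → a' ∈ O.B 0 → O.π k a = O.π k' a' →
        (k = 0 ∨ (1 ≤ k ∧ (cc, O.t k) ∈ β)) → (cc, a) ∈ β → (cc, O.π k a) ∈ β := by
      intro cc k k' hk hk' hkk a a' ha ha' heq hd hca
      rcases Nat.eq_zero_or_pos k with h0 | h1
      · subst h0; rwa [O.hπ0]
      · have hat : a = O.t k := cross h1 hk hk' (Ne.symm hkk) ha ha' heq
        have : O.π k a = O.t k := by rw [hat, O.hπt k h1 hk]
        rw [this, ← hat]; exact hca
    have h1 : (c, y) ∈ β := hya ▸ key c k k' hk hk' hkk a a' ha ha' (hya ▸ hya') hd hca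
    have h2 : (c', y) ∈ β := hya' ▸ key c' k' k hk' hk (Ne.symm hkk) a' a ha' ha
      (hya' ▸ hya) hd' hca'
    exact btrans hβ h1 (bsymm hβ h2)


-- ## β⋆ lemmas

omit hβ in
lemma mem_bk_intro {a b : A} {k : ℕ} (h : (a, b) ∈ β) :
    (O.π k a, O.π k b) ∈ O.bk β k := ⟨(a, b), h, rfl⟩

omit hβ in
lemma bk_sub_bstar {k : ℕ} (hk : k ≤ O.K) : O.bk β k ⊆ O.bstar β :=
  fun p hp => Or.inl ⟨k, hk, hp⟩

omit hβ in
lemma beta_sub_bstar : β ⊆ O.bstar β := by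
  intro p hp
  apply bk_sub_bstar (Nat.zero_le O.K)
  exact ⟨p, hp, by rw [O.hπ0, O.hπ0]⟩

omit hβ in
lemma blk_sq_sub_bstar {c x y : A} (hc : c ∈ O.B 0) (hx : x ∈ O.blk β c)
    (hy : y ∈ O.blk β c) : (x, y) ∈ O.bstar β := Or.inr ⟨c, hc, hx, hy⟩

lemma bstar_refl (x : A) : (x, x) ∈ O.bstar β := by
  obtain ⟨k, hk, b, hb, hx⟩ := rep_exists (O := O) x
  exact bk_sub_bstar hk (hx ▸ mem_bk_intro (brefl hβ hb))

lemma bstar_symm {x y : A} (h : (x, y) ∈ O.bstar β) : (y, x) ∈ O.bstar β := by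
  rcases h with ⟨k, hk, q, hq, hp⟩ | ⟨c, hc, h1, h2⟩
  · rw [Prod.ext_iff] at hp
    simp only [] at hp
    exact Or.inl ⟨k, hk, (q.2, q.1), bsymm hβ hq, by simp [hp.1, hp.2]⟩
  · exact Or.inr ⟨c, hc, h2, h1⟩

lemma bstar_elim {x y : A} (h : (x, y) ∈ O.bstar β) :
    (∃ c ∈ O.B 0, x ∈ O.blk β c ∧ y ∈ O.blk β c) ∨
      (∃ i, 1 ≤ i ∧ i ≤ O.K ∧ ∃ a ∈ O.B 0, (a, O.t i) ∉ β ∧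
        x ∈ O.π i '' O.cls β a ∧ y ∈ O.π i '' O.cls β a) := by
  rcases h with ⟨k, hk, q, hq, hp⟩ | ⟨c, hc, h1, h2⟩
  · rw [Prod.ext_iff] at hp
    simp only [] at hp
    obtain ⟨hx, hy⟩ := hp
    have ha : q.1 ∈ O.B 0 := bmem_left hβ hq
    have hb : q.2 ∈ O.B 0 := bmem_right hβ hq
    rcases Nat.eq_zero_or_pos k with h0 | h1
    · subst h0
      left
      refine ⟨q.1, ha, ?_, ?_⟩
      · rw [hx, O.hπ0]; exact mem_blk_base (brefl hβ ha)
      · rw [hy, O.hπ0]; exact mem_blk_base hq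
    · by_cases htk : (q.1, O.t k) ∈ β
      · left
        exact ⟨q.1, ha, hx ▸ mem_blk_pi h1 hk htk (brefl hβ ha),
          hy ▸ mem_blk_pi h1 hk htk hq⟩
      · right
        exact ⟨k, h1, hk, q.1, ha, htk, ⟨q.1, brefl hβ ha, hx.symm⟩, ⟨q.2, hq, hy.symm⟩⟩
  · exact Or.inl ⟨c, hc, h1, h2⟩

lemma bstar_trans {x y z : A} (h1 : (x, y) ∈ O.bstar β) (h2 : (y, z) ∈ O.bstar β) :
    (x, z) ∈ O.bstar β := by
  rcases bstar_elim hβ h1 with ⟨c, hc, hx, hy⟩ | ⟨i, hi1, hiK, a, ha, hnt, hx, hy⟩ <;>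
    rcases bstar_elim hβ h2 with ⟨c', hc', hy', hz⟩ | ⟨i', hi1', hiK', a', ha', hnt', hy', hz⟩
  · have hcc : (c, c') ∈ β := blk_overlap hβ hy hy'
    exact blk_sq_sub_bstar hc hx (blk_sub hβ hcc hz)
  · obtain ⟨u, hu, huy⟩ := hy'
    have hnt'' : (u, O.t i') ∉ β := fun h => hnt' (btrans hβ hu h)
    exact absurd (huy ▸ hy) (wingfree hβ hi1' hiK' (bmem_right hβ hu) hnt'' c)
  · obtain ⟨u, hu, huy⟩ := hy
    have hnt'' : (u, O.t i) ∉ β := fun h => hnt (btrans hβ hu h)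
    exact absurd (huy ▸ hy') (wingfree hβ hi1 hiK (bmem_right hβ hu) hnt'' c')
  · obtain ⟨u, hu, huy⟩ := hy
    obtain ⟨u', hu', huy'⟩ := hy'
    have hnt'' : (u', O.t i') ∉ β := fun h => hnt' (btrans hβ hu' h)
    obtain ⟨hii, huu⟩ := wingrep hβ hi1' hiK' (bmem_right hβ hu') hnt'' hiK
      (bmem_right hβ hu) (huy' ▸ huy).symm
    subst hii huu
    obtain ⟨v, hv, hvx⟩ := hx
    obtain ⟨v', hv', hvz⟩ := hz
    have haa : (a, a') ∈ β := btrans hβ hu (bsymm hβ hu')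
    have : (v, v') ∈ β := btrans hβ (bsymm hβ hv) (btrans hβ haa hv')
    exact bk_sub_bstar hiK (hvx ▸ hvz ▸ mem_bk_intro this)

-- ## β̃ lemmas

omit hβ in
lemma bstar_sub_btilde : O.bstar β ⊆ O.btilde β := fun _ h => Or.inl h

lemma wing_elim {n : ℕ} {c d x : A} (hx : x ∈ O.wing β n c d) :
    ∃ i, i ∈ O.T n ∧ (c, O.t i) ∈ β ∧ ∃ a, (d, a) ∈ β ∧ x = O.π i a := by
  simp only [wing, Set.mem_iUnion, Set.mem_image, Set.mem_setOf_eq] at hx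
  obtain ⟨i, ⟨hiT, hti⟩, a, hda, hax⟩ := hx
  exact ⟨i, hiT, hti, a, hda, hax.symm⟩

lemma e0_btilde {x y : A} (h : (x, y) ∈ O.btilde β) : (O.e0 x, O.e0 y) ∈ β := by
  rcases h with h | ⟨n, hn1, hnN, c, hc, d, hd, hcd, hx, hy⟩
  · rcases h with ⟨k, hk, q, hq, hp⟩ | ⟨c, hc, hx, hy⟩
    · rw [Prod.ext_iff] at hp
      simp only [] at hp
      rw [hp.1, hp.2, O.he0 k hk q.1 (bmem_left hβ hq), O.he0 k hk q.2 (bmem_right hβ hq)]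
      exact hq
    · simp only [] at hx hy
      obtain ⟨k, hk, a, ha, hya, hca, _⟩ := blk_elim hβ hx
      obtain ⟨k', hk', a', ha', hya', hca', _⟩ := blk_elim hβ hy
      rw [hya, hya', O.he0 k hk a ha, O.he0 k' hk' a' ha']
      exact btrans hβ (bsymm hβ hca) hca'
  · simp only [] at hx hy
    obtain ⟨i, hiT, hti, a, hda, hax⟩ := wing_elim hβ hx
    obtain ⟨j, hjT, htj, b, hdb, hby⟩ := wing_elim hβ hy
    have hiK := O.hT1 n hn1 hnN hiT
    have hjK := O.hT1 n hn1 hnN hjT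
    rw [Set.mem_Icc] at hiK hjK
    rw [hax, hby, O.he0 i hiK.2 a (bmem_right hβ hda), O.he0 j hjK.2 b (bmem_right hβ hdb)]
    exact btrans hβ (bsymm hβ hda) hdb

omit hβ in
lemma s_fix {n k : ℕ} (hn1 : 1 ≤ n) (hnN : n ≤ O.N) (hk : k ≤ O.K) (hkn : k ∉ O.T n)
    {x : A} (hx : x ∈ O.B k) : O.s n x = x := by
  by_cases hexists : ∃ j ∈ O.T n, x ∈ O.B j
  · obtain ⟨j, hjT, hxj⟩ := hexists
    have hjK := O.hT1 n hn1 hnN hjT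
    rw [Set.mem_Icc] at hjK
    have hne : k ≠ j := fun h => hkn (h ▸ hjT)
    have : x = O.t j := eq_tie hjK.1 hjK.2 hk hne hxj hx
    rw [O.hs1 n hn1 hnN j hjT x hxj, ← this]
  · push_neg at hexists
    exact O.hs2 n hn1 hnN x hexists

lemma s_blk {n : ℕ} (hn1 : 1 ≤ n) (hnN : n ≤ O.N) {c x : A} (hx : x ∈ O.blk β c) :
    O.s n x ∈ O.blk β c := by
  obtain ⟨k, hk, a, ha, hxa, hca, hd⟩ := blk_elim hβ hx
  by_cases hkT : k ∈ O.T n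
  · have hkK := O.hT1 n hn1 hnN hkT
    rw [Set.mem_Icc] at hkK
    have hxB : x ∈ O.B k := hxa ▸ pi_mem hk ha
    rw [O.hs1 n hn1 hnN k hkT x hxB]
    rcases hd with h0 | ⟨_, htk⟩
    · omega
    · exact mem_blk_base htk
  · rw [s_fix hn1 hnN hk hkT (hxa ▸ pi_mem hk ha)]
    exact hx

lemma s_btilde {θ : Set (A × A)} (hθ : IsEquivRel θ) (hb : O.bstar β ⊆ θ)
    {n : ℕ} (hn1 : 1 ≤ n) (hnN : n ≤ O.N) {x y : A} (hxyθ : (x, y) ∈ θ)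
    (h : (x, y) ∈ O.btilde β) : (O.s n x, O.s n y) ∈ θ := by
  rcases h with h | ⟨n', hn1', hnN', c, hc, d, hd, hcd, hx, hy⟩
  · rcases h with ⟨k, hk, q, hq, hp⟩ | ⟨c, hc, hx, hy⟩
    · rw [Prod.ext_iff] at hp
      simp only [] at hp
      have hxB : x ∈ O.B k := hp.1 ▸ pi_mem hk (bmem_left hβ hq)
      have hyB : y ∈ O.B k := hp.2 ▸ pi_mem hk (bmem_right hβ hq)
      by_cases hkT : k ∈ O.T n
      · rw [O.hs1 n hn1 hnN k hkT x hxB, O.hs1 n hn1 hnN k hkT y hyB]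
        exact hθ.1 _
      · rw [s_fix hn1 hnN hk hkT hxB, s_fix hn1 hnN hk hkT hyB]
        exact hxyθ
    · exact hb (blk_sq_sub_bstar hc (s_blk hβ hn1 hnN hx) (s_blk hβ hn1 hnN hy))
  · simp only [] at hx hy
    by_cases hnn : n' = n
    · subst hnn
      obtain ⟨i, hiT, hti, a, hda, hax⟩ := wing_elim hβ hx
      obtain ⟨j, hjT, htj, b, hdb, hby⟩ := wing_elim hβ hy
      have hiK := O.hT1 n' hn1' hnN' hiT
      have hjK := O.hT1 n' hn1' hnN' hjT
      rw [Set.mem_Icc] at hiK hjK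
      have hxB : x ∈ O.B i := hax ▸ pi_mem hiK.2 (bmem_right hβ hda)
      have hyB : y ∈ O.B j := hby ▸ pi_mem hjK.2 (bmem_right hβ hdb)
      rw [O.hs1 n' hn1' hnN' i hiT x hxB, O.hs1 n' hn1' hnN' j hjT y hyB]
      exact hb (beta_sub_bstar (btrans hβ (bsymm hβ hti) htj))
    · obtain ⟨i, hiT, hti, a, hda, hax⟩ := wing_elim hβ hx
      obtain ⟨j, hjT, htj, b, hdb, hby⟩ := wing_elim hβ hy
      have hiK := O.hT1 n' hn1' hnN' hiT
      have hjK := O.hT1 n' hn1' hnN' hjT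
      rw [Set.mem_Icc] at hiK hjK
      have hiTn : i ∉ O.T n := by
        intro hin
        obtain ⟨n₀, _, huniq⟩ := O.hT2 i hiK.1 hiK.2
        exact hnn ((huniq n' ⟨hn1', hnN', hiT⟩).trans (huniq n ⟨hn1, hnN, hin⟩).symm)
      have hjTn : j ∉ O.T n := by
        intro hjn
        obtain ⟨n₀, _, huniq⟩ := O.hT2 j hjK.1 hjK.2
        exact hnn ((huniq n' ⟨hn1', hnN', hjT⟩).trans (huniq n ⟨hn1, hnN, hjn⟩).symm)
      rw [s_fix hn1 hnN hiK.2 hiTn (hax ▸ pi_mem hiK.2 (bmem_right hβ hda)),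
        s_fix hn1 hnN hjK.2 hjTn (hby ▸ pi_mem hjK.2 (bmem_right hβ hdb))]
      exact hxyθ

-- ## Part 1: every equivalence relation in the interval is a congruence

lemma part1 {θ : Set (A × A)} (hθ : IsEquivRel θ) (h1 : O.bstar β ⊆ θ)
    (h2 : θ ⊆ O.btilde β) : IsCon O.FA θ := by
  refine ⟨hθ, ?_⟩
  rintro g hg p hp
  have hpθ : (p.1, p.2) ∈ θ := hp
  have hpt : (p.1, p.2) ∈ O.btilde β := h2 hp
  rcases hg with (⟨f, hf, rfl⟩ | ⟨k, hk, rfl⟩) | ⟨n, hn1, hnN, rfl⟩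
  · have := hβ.2 f hf (O.e0 p.1, O.e0 p.2) (e0_btilde hβ hpt)
    exact h1 (beta_sub_bstar this)
  · exact h1 (bk_sub_bstar hk (mem_bk_intro (e0_btilde hβ hpt)))
  · exact s_btilde hβ hθ h1 hn1 hnN hpθ hpt

-- ## succAbove helper

omit hβ in
lemma wing_elim' {n : ℕ} {c d x : A} :
    x ∈ O.wing β n c d ↔ ∃ i, i ∈ O.T n ∧ (c, O.t i) ∈ β ∧ x ∈ O.π i '' O.cls β d := by
  simp only [wing, Set.mem_iUnion, Set.mem_setOf_eq]
  constructor
  · rintro ⟨i, ⟨h1, h2⟩, h3⟩; exact ⟨i, h1, h2, h3⟩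
  · rintro ⟨i, h1, h2, h3⟩; exact ⟨i, ⟨h1, h2⟩, h3⟩

omit hβ

def sa {m : ℕ} (r : Fin m) (ℓ : Fin (m - 1)) : Fin m :=
  Fin.cast (Nat.succ_pred_eq_of_pos r.pos)
    ((Fin.cast (Nat.succ_pred_eq_of_pos r.pos).symm r).succAbove ℓ)

lemma sa_ne {m : ℕ} (r : Fin m) (ℓ : Fin (m - 1)) : sa r ℓ ≠ r := by
  intro h
  have h' := congrArg Fin.val h
  simp only [sa, Fin.coe_cast] at h'
  exact Fin.succAbove_ne (Fin.cast (Nat.succ_pred_eq_of_pos r.pos).symm r) ℓ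
    (Fin.ext (by simpa using h'))

lemma sa_inj {m : ℕ} {r : Fin m} {ℓ ℓ' : Fin (m - 1)} (h : sa r ℓ = sa r ℓ') : ℓ = ℓ' := by
  have h' := congrArg Fin.val h
  simp only [sa, Fin.coe_cast] at h'
  exact Fin.succAbove_right_inj.mp (Fin.ext h')

lemma sa_surj {m : ℕ} {r ℓ₀ : Fin m} (h : ℓ₀ ≠ r) : ∃ ℓ, sa r ℓ = ℓ₀ := by
  have e := Nat.succ_pred_eq_of_pos r.pos
  have hne : Fin.cast e.symm ℓ₀ ≠ Fin.cast e.symm r := by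
    intro hh
    exact h (Fin.ext (by simpa using congrArg Fin.val hh))
  obtain ⟨z, hz⟩ := Fin.exists_succAbove_eq hne
  refine ⟨z, Fin.ext ?_⟩
  have := congrArg Fin.val hz
  simp only [Fin.coe_cast] at this ⊢
  simpa [sa] using this

-- ## class system lemmas

section Classes

variable {m : ℕ} {C : Fin m → Set A} {c : Fin m → A}

/-- the index set `𝒯_{n+1} ∩ ℐ_r`. -/
def SS (O : OvI A) (C : Fin m → Set A) (r : Fin m) (n : Fin O.N) : Set ℕ :=
  O.T (n.1 + 1) ∩ {i | O.t i ∈ C r}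

lemma mem_C_iff (hCeq : ∀ r, C r = O.cls β (c r)) {r : Fin m} {x : A} :
    x ∈ C r ↔ (c r, x) ∈ β := by
  rw [hCeq]; exact Iff.rfl

include hβ in
lemma C_sub_B0 (hCeq : ∀ r, C r = O.cls β (c r)) {r : Fin m} {x : A} (hx : x ∈ C r) :
    x ∈ O.B 0 :=
  bmem_right hβ ((mem_C_iff hCeq).mp hx)

include hβ in
lemma crep_mem (hc : ∀ r, c r ∈ O.B 0) (hCeq : ∀ r, C r = O.cls β (c r)) (r : Fin m) :
    c r ∈ C r := (mem_C_iff hCeq).mpr (brefl hβ (hc r))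

include hβ in
lemma C_closed (hCeq : ∀ r, C r = O.cls β (c r)) {r : Fin m} {x y : A} (hx : x ∈ C r)
    (h : (x, y) ∈ β) : y ∈ C r :=
  (mem_C_iff hCeq).mpr (btrans hβ ((mem_C_iff hCeq).mp hx) h)

include hβ in
lemma C_disj (hCeq : ∀ r, C r = O.cls β (c r))
    (hCpart : ∀ x ∈ O.B 0, ∃! r, x ∈ C r) {r r' : Fin m} (hne : r ≠ r') {x : A}
    (hx : x ∈ C r) (hx' : x ∈ C r') : False := by
  obtain ⟨r₀, _, hu⟩ := hCpart x (C_sub_B0 hβ hCeq hx)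
  exact hne ((hu r hx).trans (hu r' hx').symm)

include hβ in
lemma C_not_rel (hCeq : ∀ r, C r = O.cls β (c r))
    (hCpart : ∀ x ∈ O.B 0, ∃! r, x ∈ C r) {r r' : Fin m} (hne : r ≠ r') {x y : A}
    (hx : x ∈ C r) (hy : y ∈ C r') (h : (x, y) ∈ β) : False :=
  C_disj hβ hCeq hCpart hne (C_closed hβ hCeq hx h) hy

lemma S_bound {r : Fin m} {n : Fin O.N} {i : ℕ} (hi : i ∈ SS O C r n) :
    1 ≤ i ∧ i ≤ O.K := by
  have := O.hT1 (n.1 + 1) (Nat.le_add_left 1 n.1) (Nat.succ_le_of_lt n.2) hi.1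
  rwa [Set.mem_Icc] at this

include hβ in
lemma S_uniq (hCeq : ∀ r, C r = O.cls β (c r))
    (hCpart : ∀ x ∈ O.B 0, ∃! r, x ∈ C r) {r r' : Fin m} {n n' : Fin O.N} {i : ℕ}
    (hi : i ∈ SS O C r n) (hi' : i ∈ SS O C r' n') : r = r' ∧ n = n' := by
  constructor
  · by_contra hne
    exact C_disj hβ hCeq hCpart hne hi.2 hi'.2
  · obtain ⟨h1, h2⟩ := S_bound hi
    obtain ⟨n₀, _, hu⟩ := O.hT2 i h1 h2
    have e1 := hu (n.1 + 1) ⟨Nat.le_add_left 1 n.1, Nat.succ_le_of_lt n.2, hi.1⟩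
    have e2 := hu (n'.1 + 1) ⟨Nat.le_add_left 1 n'.1, Nat.succ_le_of_lt n'.2, hi'.1⟩
    exact Fin.ext (by omega)

include hβ in
/-- wing-type condition: elements of `C (sa r ℓ)` are not `β`-related to `t i` for
`i ∈ SS r n`. -/
lemma wt (hCeq : ∀ r, C r = O.cls β (c r))
    (hCpart : ∀ x ∈ O.B 0, ∃! r, x ∈ C r) {r : Fin m} {n : Fin O.N} {ℓ : Fin (m - 1)}
    {i : ℕ} (hi : i ∈ SS O C r n) {a : A} (ha : a ∈ C (sa r ℓ)) : (a, O.t i) ∉ β :=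
  fun h => C_disj hβ hCeq hCpart (sa_ne r ℓ) (C_closed hβ hCeq ha h) hi.2

end Classes

-- ## the maps Φ and Ψ

section Maps

variable {m : ℕ} {C : Fin m → Set A} {c : Fin m → A}

/-- The forward map of the isomorphism: a congruence `θ` in the interval restricts,
for each `r`, `n`, `ℓ`, to an equivalence relation on the index set `SS O C r n`. -/
def Phi (O : OvI A) (C : Fin m → Set A) (c : Fin m → A) (θ : Set (A × A))
    (hθ : IsEquivRel θ) (r : Fin m) (n : Fin O.N) (ℓ : Fin (m - 1)) :
    Setoid ↥(SS O C r n) :=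
  ⟨fun i j => (O.π i.1 (c (sa r ℓ)), O.π j.1 (c (sa r ℓ))) ∈ θ,
    ⟨fun _ => hθ.1 _, fun h => hθ.2.1 _ _ h, fun h h' => hθ.2.2 _ _ _ h h'⟩⟩

/-- The inverse map: from a family of equivalence relations on the index sets,
build a congruence in the interval. -/
def Psi (O : OvI A) (β : Set (A × A)) (C : Fin m → Set A)
    (g : ∀ (r : Fin m) (n : Fin O.N), Fin (m - 1) → Setoid ↥(SS O C r n)) :
    Set (A × A) :=
  O.bstar β ∪ {p | ∃ (r : Fin m) (n : Fin O.N) (ℓ : Fin (m - 1)) (i j : ℕ)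
    (hi : i ∈ SS O C r n) (hj : j ∈ SS O C r n), (g r n ℓ) ⟨i, hi⟩ ⟨j, hj⟩ ∧
    p.1 ∈ O.π i '' C (sa r ℓ) ∧ p.2 ∈ O.π j '' C (sa r ℓ)}

variable {g : ∀ (r : Fin m) (n : Fin O.N), Fin (m - 1) → Setoid ↥(SS O C r n)}

lemma bstar_sub_Psi : O.bstar β ⊆ Psi O β C g := fun _ h => Or.inl h

include hβ in
lemma Psi_sub_btilde (hc : ∀ r, c r ∈ O.B 0) (hCeq : ∀ r, C r = O.cls β (c r))
    (hCpart : ∀ x ∈ O.B 0, ∃! r, x ∈ C r) : Psi O β C g ⊆ O.btilde β := by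
  rintro ⟨x, y⟩ (h | ⟨r, n, ℓ, i, j, hi, hj, hg, h1, h2⟩)
  · exact bstar_sub_btilde h
  · right
    refine ⟨n.1 + 1, Nat.le_add_left 1 n.1, Nat.succ_le_of_lt n.2, c r, hc r,
      c (sa r ℓ), hc _, ?_, ?_, ?_⟩
    · intro hrel
      exact C_not_rel hβ hCeq hCpart (Ne.symm (sa_ne r ℓ)) (crep_mem hβ hc hCeq r)
        (crep_mem hβ hc hCeq _) hrel
    · rw [wing_elim' (O := O)]
      refine ⟨i, hi.1, (mem_C_iff hCeq).mp hi.2, ?_⟩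
      rw [← hCeq]
      exact h1
    · rw [wing_elim' (O := O)]
      refine ⟨j, hj.1, (mem_C_iff hCeq).mp hj.2, ?_⟩
      rw [← hCeq]
      exact h2

include hβ in
lemma bstar_absorb (hCeq : ∀ r, C r = O.cls β (c r))
    (hCpart : ∀ x ∈ O.B 0, ∃! r, x ∈ C r) {r : Fin m} {n : Fin O.N} {ℓ : Fin (m - 1)}
    {i : ℕ} (hi : i ∈ SS O C r n) {x y : A} (hxy : (x, y) ∈ O.bstar β)
    (hy : y ∈ O.π i '' C (sa r ℓ)) : x ∈ O.π i '' C (sa r ℓ) := by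
  obtain ⟨a, haC, hay⟩ := hy
  have haB : a ∈ O.B 0 := C_sub_B0 hβ hCeq haC
  have hnt : (a, O.t i) ∉ β := wt hβ hCeq hCpart hi haC
  obtain ⟨hi1, hiK⟩ := S_bound hi
  rcases bstar_elim hβ hxy with ⟨c₀, hc₀, hx, hy'⟩ | ⟨i', h1', hK', a', ha', hnt', hx, hy'⟩
  · exact absurd (hay ▸ hy') (wingfree hβ hi1 hiK haB hnt c₀)
  · obtain ⟨u, hu, huy⟩ := hy'
    -- huy : O.π i' u = y = O.π i a
    obtain ⟨hii, hua⟩ := wingrep hβ hi1 hiK haB hnt hK' (bmem_right hβ hu)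
      (hay ▸ huy).symm
    obtain ⟨v, hv, hvx⟩ := hx
    have hav : (a, v) ∈ β := btrans hβ (bsymm hβ (hua ▸ hu)) hv
    exact ⟨v, C_closed hβ hCeq haC hav, by rw [← hvx, hii]⟩

include hβ in
lemma wing_mem_rigid (hCeq : ∀ r, C r = O.cls β (c r))
    (hCpart : ∀ x ∈ O.B 0, ∃! r, x ∈ C r) {r r' : Fin m} {n n' : Fin O.N}
    {ℓ ℓ' : Fin (m - 1)} {i i' : ℕ} (hi : i ∈ SS O C r n) (hi' : i' ∈ SS O C r' n')
    {x : A} (hx : x ∈ O.π i '' C (sa r ℓ)) (hx' : x ∈ O.π i' '' C (sa r' ℓ')) :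
    i = i' ∧ r = r' ∧ n = n' ∧ ℓ = ℓ' := by
  obtain ⟨a, haC, hax⟩ := hx
  obtain ⟨a', haC', hax'⟩ := hx'
  have hnt : (a, O.t i) ∉ β := wt hβ hCeq hCpart hi haC
  obtain ⟨hii, haa⟩ := wingrep hβ (S_bound hi).1 (S_bound hi).2 (C_sub_B0 hβ hCeq haC)
    hnt (S_bound hi').2 (C_sub_B0 hβ hCeq haC') (by rw [hax, hax'])
  subst hii haa
  have hsa : sa r ℓ = sa r' ℓ' := by
    by_contra hne
    exact C_disj hβ hCeq hCpart hne haC haC'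
  obtain ⟨hrr, hnn⟩ := S_uniq hβ hCeq hCpart hi hi'
  subst hrr
  exact ⟨rfl, rfl, hnn, sa_inj hsa⟩

include hβ in
lemma Psi_equiv (hCeq : ∀ r, C r = O.cls β (c r))
    (hCpart : ∀ x ∈ O.B 0, ∃! r, x ∈ C r) : IsEquivRel (Psi O β C g) := by
  refine ⟨fun x => Or.inl (bstar_refl hβ x), ?_, ?_⟩
  · rintro x y (h | ⟨r, n, ℓ, i, j, hi, hj, hg, h1, h2⟩)
    · exact Or.inl (bstar_symm hβ h)
    · exact Or.inr ⟨r, n, ℓ, j, i, hj, hi, (g r n ℓ).iseqv.symm hg, h2, h1⟩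
  · rintro x y z hxy hyz
    rcases hxy with h | ⟨r, n, ℓ, i, j, hi, hj, hg, h1, h2⟩ <;>
      rcases hyz with h' | ⟨r', n', ℓ', i', j', hi', hj', hg', h1', h2'⟩
    · exact Or.inl (bstar_trans hβ h h')
    · exact Or.inr ⟨r', n', ℓ', i', j', hi', hj', hg',
        bstar_absorb hβ hCeq hCpart hi' h h1', h2'⟩
    · exact Or.inr ⟨r, n, ℓ, i, j, hi, hj, hg, h1,
        bstar_absorb hβ hCeq hCpart hj (bstar_symm hβ h') h2⟩
    · obtain ⟨hji, hrr, hnn, hll⟩ := wing_mem_rigid hβ hCeq hCpart hj hi' h2 h1'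
      subst hrr hnn hll
      subst hji
      exact Or.inr ⟨r, n, ℓ, i, j', hi, hj', (g r n ℓ).iseqv.trans hg hg', h1, h2'⟩

end Maps

-- ## Φ and Ψ are mutually inverse

section Inverse

variable {m : ℕ} {C : Fin m → Set A} {c : Fin m → A}
variable {g : ∀ (r : Fin m) (n : Fin O.N), Fin (m - 1) → Setoid ↥(SS O C r n)}

include hβ in
lemma Psi_Phi (hCeq : ∀ r, C r = O.cls β (c r))
    (hCpart : ∀ x ∈ O.B 0, ∃! r, x ∈ C r) {θ : Set (A × A)} (hθ : IsEquivRel θ)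
    (h1 : O.bstar β ⊆ θ) (h2 : θ ⊆ O.btilde β) :
    Psi O β C (Phi O C c θ hθ) = θ := by
  apply Set.Subset.antisymm
  · rintro ⟨x, y⟩ (h | ⟨r, n, ℓ, i, j, hi, hj, hg, hx, hy⟩)
    · exact h1 h
    · obtain ⟨a, haC, hax⟩ := hx
      obtain ⟨b, hbC, hby⟩ := hy
      have e1 : (O.π i (c (sa r ℓ)), O.π i a) ∈ θ :=
        h1 (bk_sub_bstar (S_bound hi).2 (mem_bk_intro ((mem_C_iff hCeq).mp haC)))
      have e2 : (O.π j (c (sa r ℓ)), O.π j b) ∈ θ :=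
        h1 (bk_sub_bstar (S_bound hj).2 (mem_bk_intro ((mem_C_iff hCeq).mp hbC)))
      have key : (O.π i a, O.π j b) ∈ θ :=
        hθ.2.2 _ _ _ (hθ.2.1 _ _ e1) (hθ.2.2 _ _ _ hg e2)
      have hax' : O.π i a = x := hax
      have hby' : O.π j b = y := hby
      show ((x : A), y) ∈ θ
      rw [← hax', ← hby']
      exact key
  · rintro ⟨x, y⟩ hp
    rcases h2 hp with h | ⟨n'', hn1, hnN, c₀, hc₀, d, hd, hcd, hx, hy⟩
    · exact Or.inl h
    · right
      obtain ⟨i, hiT, hti, a, hda, hax⟩ := wing_elim hβ hx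
      obtain ⟨j, hjT, htj, b, hdb, hby⟩ := wing_elim hβ hy
      have hiK := O.hT1 n'' hn1 hnN hiT
      have hjK := O.hT1 n'' hn1 hnN hjT
      rw [Set.mem_Icc] at hiK hjK
      have htiB : O.t i ∈ O.B 0 := (O.ht i hiK.1 hiK.2).1
      obtain ⟨r, htir, -⟩ := hCpart (O.t i) htiB
      have haB := bmem_right hβ hda
      obtain ⟨ℓ₀, haℓ, -⟩ := hCpart a haB
      have hℓr : ℓ₀ ≠ r := by
        intro hh
        subst hh
        have e1 : (c ℓ₀, a) ∈ β := (mem_C_iff hCeq).mp haℓ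
        have e2 : (c ℓ₀, O.t i) ∈ β := (mem_C_iff hCeq).mp htir
        have e3 : (a, O.t i) ∈ β := btrans hβ (bsymm hβ e1) e2
        exact hcd (btrans hβ hti (bsymm hβ (btrans hβ hda e3)))
      obtain ⟨ℓ, hℓ⟩ := sa_surj hℓr
      have hn2 : n'' - 1 < O.N := by omega
      set n : Fin O.N := ⟨n'' - 1, hn2⟩ with hn
      have hn'' : n.1 + 1 = n'' := by simp only [hn]; omega
      have hiS : i ∈ SS O C r n := ⟨by rw [hn'']; exact hiT, htir⟩
      have htjr : O.t j ∈ C r := C_closed hβ hCeq htir (btrans hβ (bsymm hβ hti) htj)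
      have hjS : j ∈ SS O C r n := ⟨by rw [hn'']; exact hjT, htjr⟩
      have hbℓ : b ∈ C ℓ₀ := C_closed hβ hCeq haℓ (btrans hβ (bsymm hβ hda) hdb)
      have f1 : (O.π i (c ℓ₀), O.π i a) ∈ θ :=
        h1 (bk_sub_bstar hiK.2 (mem_bk_intro ((mem_C_iff hCeq).mp haℓ)))
      have f2 : (O.π j (c ℓ₀), O.π j b) ∈ θ :=
        h1 (bk_sub_bstar hjK.2 (mem_bk_intro ((mem_C_iff hCeq).mp hbℓ)))
      have hax' : x = O.π i a := hax
      have hby' : y = O.π j b := hby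
      have hpθ : (O.π i a, O.π j b) ∈ θ := by
        rw [← hax', ← hby']
        exact hp
      have hrel : (O.π i (c ℓ₀), O.π j (c ℓ₀)) ∈ θ :=
        hθ.2.2 _ _ _ f1 (hθ.2.2 _ _ _ hpθ (hθ.2.1 _ _ f2))
      refine ⟨r, n, ℓ, i, j, hiS, hjS, ?_, ⟨a, ?_, hax.symm⟩, ⟨b, ?_, hby.symm⟩⟩
      · show (O.π i (c (sa r ℓ)), O.π j (c (sa r ℓ))) ∈ θ
        rw [hℓ]
        exact hrel
      · rw [hℓ]
        exact haℓ
      · rw [hℓ]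
        exact hbℓ

include hβ in
lemma Phi_Psi (hc : ∀ r, c r ∈ O.B 0) (hCeq : ∀ r, C r = O.cls β (c r))
    (hCpart : ∀ x ∈ O.B 0, ∃! r, x ∈ C r)
    (hE : IsEquivRel (Psi O β C g)) :
    Phi O C c (Psi O β C g) hE = g := by
  funext r n ℓ
  apply Setoid.ext
  intro i j
  constructor
  · rintro (h | ⟨r', n', ℓ', i', j', hi', hj', hg', hx, hy⟩)
    · -- bstar case forces i = j
      have hdc : c (sa r ℓ) ∈ C (sa r ℓ) := crep_mem hβ hc hCeq _
      have hnti : (c (sa r ℓ), O.t i.1) ∉ β := wt hβ hCeq hCpart i.2 hdc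
      have hntj : (c (sa r ℓ), O.t j.1) ∉ β := wt hβ hCeq hCpart j.2 hdc
      have hdB : c (sa r ℓ) ∈ O.B 0 := hc _
      rcases bstar_elim hβ h with ⟨c₀, hc₀, hx, hy⟩ | ⟨i'', h1'', hK'', a'', ha'', hnt'', hx, hy⟩
      · exact absurd hx (wingfree hβ (S_bound i.2).1 (S_bound i.2).2 hdB hnti c₀)
      · obtain ⟨u, hu, hux⟩ := hx
        obtain ⟨v, hv, hvy⟩ := hy
        obtain ⟨e1, -⟩ := wingrep hβ (S_bound i.2).1 (S_bound i.2).2 hdB hnti hK''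
          (bmem_right hβ hu) hux.symm
        obtain ⟨e2, -⟩ := wingrep hβ (S_bound j.2).1 (S_bound j.2).2 hdB hntj hK''
          (bmem_right hβ hv) hvy.symm
        have : i = j := Subtype.ext (e1.symm.trans e2)
        subst this
        exact (g r n ℓ).iseqv.refl i
    · -- wing case
      have hself : O.π i.1 (c (sa r ℓ)) ∈ O.π i.1 '' C (sa r ℓ) :=
        ⟨c (sa r ℓ), crep_mem hβ hc hCeq _, rfl⟩
      obtain ⟨e1, hrr, hnn, hll⟩ := wing_mem_rigid hβ hCeq hCpart i.2 hi' hself hx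
      subst hrr hnn hll
      have hself' : O.π j.1 (c (sa r ℓ)) ∈ O.π j.1 '' C (sa r ℓ) :=
        ⟨c (sa r ℓ), crep_mem hβ hc hCeq _, rfl⟩
      obtain ⟨e2, -, -, -⟩ := wing_mem_rigid hβ hCeq hCpart j.2 hj' hself' hy
      have hi'' : (⟨i', hi'⟩ : ↥(SS O C r n)) = i := Subtype.ext e1.symm
      have hj'' : (⟨j', hj'⟩ : ↥(SS O C r n)) = j := Subtype.ext e2.symm
      rw [hi'', hj''] at hg'
      exact hg'
  · intro hg
    exact Or.inr ⟨r, n, ℓ, i.1, j.1, i.2, j.2, hg,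
      ⟨c (sa r ℓ), crep_mem hβ hc hCeq _, rfl⟩, ⟨c (sa r ℓ), crep_mem hβ hc hCeq _, rfl⟩⟩

lemma Psi_mono {g g' : ∀ (r : Fin m) (n : Fin O.N), Fin (m - 1) → Setoid ↥(SS O C r n)}
    (h : ∀ r n ℓ, g r n ℓ ≤ g' r n ℓ) : Psi O β C g ⊆ Psi O β C g' := by
  rintro p (hp | ⟨r, n, ℓ, i, j, hi, hj, hg, h1, h2⟩)
  · exact Or.inl hp
  · exact Or.inr ⟨r, n, ℓ, i, j, hi, hj, Setoid.le_def.mp (h r n ℓ) hg, h1, h2⟩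

end Inverse

end OvI
end Overalg

open Overalg OvI in
/-- In an overalgebra `𝐀` of the first type, for `β ∈ Con 𝐁` with classes
`C 0, …, C (m-1)`, the interval `[β⋆, β̃]` in `Con 𝐀` consists of *all* equivalence
relations on `A` lying between `β⋆` and `β̃`, and is isomorphic as a lattice to
`∏_{r=1}^{m} ∏_{n=1}^{N} (Eq(𝒯_n ∩ ℐ_r))^{m−1}`. -/
theorem interval_bstar_btilde {A : Type*} (O : OvI A) (β : Set (A × A)) (hβ : O.ConB β)
    (m : ℕ) (C : Fin m → Set A)
    (hCcls : ∀ r : Fin m, ∃ c ∈ O.B 0, C r = O.cls β c)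
    (hCpart : ∀ x ∈ O.B 0, ∃! r : Fin m, x ∈ C r) :
    {θ : Set (A × A) | IsCon O.FA θ ∧ O.bstar β ⊆ θ ∧ θ ⊆ O.btilde β} =
      {θ : Set (A × A) | IsEquivRel θ ∧ O.bstar β ⊆ θ ∧ θ ⊆ O.btilde β} ∧
    Nonempty
      ({θ : Set (A × A) // IsCon O.FA θ ∧ O.bstar β ⊆ θ ∧ θ ⊆ O.btilde β} ≃o
        ((r : Fin m) → (n : Fin O.N) → Fin (m - 1) →
          Setoid ↥(O.T (n.1 + 1) ∩ {i : ℕ | O.t i ∈ C r}))) := by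
  constructor
  · ext θ
    simp only [Set.mem_setOf_eq]
    exact ⟨fun ⟨hcon, h1, h2⟩ => ⟨hcon.1, h1, h2⟩,
      fun ⟨he, h1, h2⟩ => ⟨part1 hβ he h1 h2, h1, h2⟩⟩
  · choose c hc hCeq using hCcls
    refine ⟨{
      toFun := fun θ => Phi O C c θ.1 θ.2.1.1
      invFun := fun g => ⟨Psi O β C g,
        part1 hβ (Psi_equiv hβ hCeq hCpart) bstar_sub_Psi
          (Psi_sub_btilde hβ hc hCeq hCpart),
        bstar_sub_Psi, Psi_sub_btilde hβ hc hCeq hCpart⟩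
      left_inv := fun θ => Subtype.ext (Psi_Phi hβ hCeq hCpart θ.2.1.1 θ.2.2.1 θ.2.2.2)
      right_inv := fun g => Phi_Psi hβ hc hCeq hCpart _
      map_rel_iff' := ?_ }⟩
    intro θ θ'
    constructor
    · intro h
      show θ.1 ⊆ θ'.1
      calc θ.1 = Psi O β C (Phi O C c θ.1 θ.2.1.1) :=
            (Psi_Phi hβ hCeq hCpart _ θ.2.2.1 θ.2.2.2).symm
        _ ⊆ Psi O β C (Phi O C c θ'.1 θ'.2.1.1) := Psi_mono (fun r n ℓ => h r n ℓ)
        _ = θ'.1 := Psi_Phi hβ hCeq hCpart _ θ'.2.2.1 θ'.2.2.2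
    · intro h r n ℓ
      exact Setoid.le_def.mpr fun hr => h hr
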